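/- Let g ≥ 1 and let V be a 2g×2g integer matrix with det(Vᵀ − V) = 1. Then there exists a primitive vector x ∈ ℤ^{2g} with xᵀVx ≠ 0, and moreover there exist infinitely many pairwise distinct primitive vectors x_n ∈ ℤ^{2g} with |x_nᵀ V x_n| → ∞. -/
import Mathlib
open Matrix Filter

theorem aux_poly (a b c : ℤ) (hb : b ≠ 0) :
    Tendsto (fun n : ℕ => |a * (n:ℤ)^2 + b * n + c|) atTop atTop := by
  have hC : Tendsto (fun n : ℕ => (n:ℤ) - |c|) atTop atTop :=
    tendsto_atTop_add_const_right _ _ tendsto_natCast_atTop_atTop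
  apply tendsto_atTop_mono' atTop ?_ hC
  · obtain ⟨N, hN⟩ := exists_nat_ge (|b| + |c| + 1 : ℤ)
    filter_upwards [eventually_ge_atTop N] with n hn
    have hm : (|b| + |c| + 1 : ℤ) ≤ (n:ℤ) := le_trans hN (by exact_mod_cast hn)
    set m : ℤ := (n:ℤ) with hmdef
    have hm0 : 0 ≤ m := by positivity
    have hb1 : (1:ℤ) ≤ |b| := Int.one_le_abs hb
    have hc0 : (0:ℤ) ≤ |c| := abs_nonneg c
    have h1 : (1:ℤ) ≤ |a * m + b| := by
      rcases eq_or_ne a 0 with rfl | ha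
      · simpa using hb1
      · have ha1 : (1:ℤ) ≤ |a| := Int.one_le_abs ha
        have h2 : |a * m| ≤ |a * m + b| + |b| := by
          calc |a * m| = |(a * m + b) + (-b)| := by ring_nf
            _ ≤ |a * m + b| + |(-b)| := abs_add_le _ _
            _ = |a * m + b| + |b| := by rw [abs_neg]
        have h3 : |a * m| = |a| * m := by rw [abs_mul, abs_of_nonneg hm0]
        nlinarith
    have h4 : m * |a * m + b| ≤ |a * m^2 + b * m + c| + |c| := by
      calc m * |a * m + b| = |m * (a * m + b)| := by
            rw [abs_mul, abs_of_nonneg hm0]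
        _ = |(a * m^2 + b * m + c) + (-c)| := by ring_nf
        _ ≤ |a * m^2 + b * m + c| + |(-c)| := abs_add_le _ _
        _ = |a * m^2 + b * m + c| + |c| := by rw [abs_neg]
    nlinarith

theorem stmt_17 (g : ℕ) (hg : 1 ≤ g) (V : Matrix (Fin (2 * g)) (Fin (2 * g)) ℤ)
    (hdet : (V.transpose - V).det = 1) :
    (∃ x : Fin (2 * g) → ℤ, Finset.univ.gcd x = 1 ∧ x ⬝ᵥ V.mulVec x ≠ 0) ∧
    (∃ x : ℕ → (Fin (2 * g) → ℤ), Function.Injective x ∧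
      (∀ n, Finset.univ.gcd (x n) = 1) ∧
      Tendsto (fun n => |x n ⬝ᵥ V.mulVec (x n)|) atTop atTop) := by
  set A := V.transpose - V with hAdef
  have hU : IsUnit A.det := by rw [hdet]; exact isUnit_one
  have i0 : Fin (2 * g) := ⟨0, by omega⟩
  set e : Fin (2 * g) → ℤ := Pi.single i0 1 with hedef
  set b : Fin (2 * g) → ℤ := A⁻¹.mulVec e with hbdef
  have hAb : A.mulVec b = e := by
    rw [hbdef, mulVec_mulVec, Matrix.mul_nonsing_inv A hU, one_mulVec]
  have hskew : ∀ x y : Fin (2 * g) → ℤ,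
      x ⬝ᵥ A.mulVec y = y ⬝ᵥ V.mulVec x - x ⬝ᵥ V.mulVec y := by
    intro x y
    rw [hAdef, Matrix.sub_mulVec, dotProduct_sub, dotProduct_mulVec,
      vecMul_transpose, dotProduct_comm]
  have hbAb : b ⬝ᵥ A.mulVec b = 0 := by rw [hskew]; ring
  have hbi0 : b i0 = 0 := by
    have h := hbAb
    rw [hAb, hedef, dotProduct_single, mul_one] at h
    exact h
  have heAb : e ⬝ᵥ A.mulVec b = 1 := by
    rw [hAb, hedef, dotProduct_single, mul_one, Pi.single_eq_same]
  have hodd : b ⬝ᵥ V.mulVec e - e ⬝ᵥ V.mulVec b = 1 := by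
    rw [← hskew, heAb]
  -- the sequence
  set x : ℕ → (Fin (2 * g) → ℤ) := fun n => e + (n : ℤ) • b with hxdef
  -- value of the quadratic form
  have hq : ∀ n : ℕ, x n ⬝ᵥ V.mulVec (x n) =
      (b ⬝ᵥ V.mulVec b) * (n:ℤ)^2 +
      (e ⬝ᵥ V.mulVec b + b ⬝ᵥ V.mulVec e) * (n:ℤ) + e ⬝ᵥ V.mulVec e := by
    intro n
    rw [hxdef]
    simp only [Matrix.mulVec_add, Matrix.mulVec_smul, dotProduct_add,
      add_dotProduct, dotProduct_smul, smul_dotProduct, smul_eq_mul]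
    ring
  -- coefficient of n is odd hence nonzero
  have hbne : e ⬝ᵥ V.mulVec b + b ⬝ᵥ V.mulVec e ≠ 0 := by
    intro h
    omega
  -- primitivity
  have hprim : ∀ n : ℕ, Finset.univ.gcd (x n) = 1 := by
    intro n
    have hval : x n i0 = 1 := by
      rw [hxdef]; simp [hedef, hbi0, Pi.single_eq_same]
    have hdvd : Finset.univ.gcd (x n) ∣ 1 := by
      rw [← hval]; exact Finset.gcd_dvd (Finset.mem_univ i0)
    have hnonneg : 0 ≤ Finset.univ.gcd (x n) :=
      Int.nonneg_of_normalize_eq_self Finset.normalize_gcd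
    exact Int.eq_one_of_dvd_one hnonneg hdvd
  -- b is nonzero somewhere
  obtain ⟨j, hj⟩ : ∃ j, b j ≠ 0 := by
    by_contra h
    push_neg at h
    have hb0 : b = 0 := funext h
    rw [hb0, Matrix.mulVec_zero] at hAb
    have := congrFun hAb i0
    rw [hedef, Pi.single_eq_same] at this
    exact one_ne_zero this.symm
  have hinj : Function.Injective x := by
    intro n m hnm
    have h := congrFun hnm j
    rw [hxdef] at h
    simp only [Pi.add_apply, Pi.smul_apply, smul_eq_mul] at h
    have : (n : ℤ) = m := by
      have := mul_right_cancel₀ hj (by linarith : (n:ℤ) * b j = (m:ℤ) * b j)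
      exact this
    exact_mod_cast this
  have htend : Tendsto (fun n => |x n ⬝ᵥ V.mulVec (x n)|) atTop atTop := by
    have := aux_poly (b ⬝ᵥ V.mulVec b)
      (e ⬝ᵥ V.mulVec b + b ⬝ᵥ V.mulVec e) (e ⬝ᵥ V.mulVec e) hbne
    refine this.congr fun n => ?_
    rw [hq n]
  refine ⟨?_, x, hinj, hprim, htend⟩
  obtain ⟨n, hn⟩ := (htend.eventually (eventually_ge_atTop 1)).exists
  exact ⟨x n, hprim n, fun h => by rw [h] at hn; simp at hn⟩
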